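/- Let G be the graph on {0,1}^5 where distinct u, v are adjacent iff 1 ≤ d_H(u,v) ≤ 2. Then the independence number of the strong product G ⊠ G is at least 20. -/

import Mathlib

open SimpleGraph

def gilbert : SimpleGraph (Fin 5 → Bool) where
  Adj u v := 1 ≤ hammingDist u v ∧ hammingDist u v ≤ 2
  symm := ⟨fun u v h => ⟨hammingDist_comm v u ▸ h.1, hammingDist_comm v u ▸ h.2⟩⟩
  loopless := ⟨fun u h => by simpa [hammingDist_self] using h.1⟩

instance : DecidableRel gilbert.Adj :=
  fun u v => inferInstanceAs (Decidable (1 ≤ hammingDist u v ∧ hammingDist u v ≤ 2))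
/-- A set of vertices is independent if no two of its elements are adjacent. -/
def IsIndep {V : Type*} (G : SimpleGraph V) (s : Set V) : Prop :=
  s.Pairwise fun u v => ¬ G.Adj u v

/-- The independence number: the largest size of an independent set. -/
noncomputable def indepNum {V : Type*} [Fintype V] (G : SimpleGraph V) : ℕ :=
  sSup {n | ∃ s : Finset V, IsIndep G ↑s ∧ s.card = n}
/-- The strong product of two simple graphs. -/
def strongProd {V W : Type*} (G : SimpleGraph V) (H : SimpleGraph W) : SimpleGraph (V × W) where
  Adj a b := a ≠ b ∧ (a.1 = b.1 ∨ G.Adj a.1 b.1) ∧ (a.2 = b.2 ∨ H.Adj a.2 b.2)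
  symm := ⟨fun a b h => ⟨fun e => h.1 e.symm, (h.2.1).imp Eq.symm (fun hadj => G.adj_symm hadj),
    (h.2.2).imp Eq.symm (fun hadj => H.adj_symm hadj)⟩⟩
  loopless := ⟨fun a h => h.1 rfl⟩

/-!
The independent set is the union of the orbits of two vertices under the group of order ten
generated by the cyclic shift of the five coordinates and by complementation, acting diagonally
on both factors. These maps preserve Hamming distance, so they are automorphisms of
`strongProd gilbert gilbert`. That the twenty orbit points are distinct and pairwise non-adjacent
is checked by evaluation.
-/

instance {V W : Type*} [DecidableEq V] [DecidableEq W] (G : SimpleGraph V) (H : SimpleGraph W)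
    [DecidableRel G.Adj] [DecidableRel H.Adj] : DecidableRel (strongProd G H).Adj :=
  fun _ _ => inferInstanceAs (Decidable (_ ∧ _ ∧ _))

theorem le_indepNum {V : Type*} [Fintype V] {G : SimpleGraph V} {s : Finset V}
    (hs : IsIndep G ↑s) : s.card ≤ _root_.indepNum G :=
  le_csSup ⟨Fintype.card V, by rintro n ⟨t, -, rfl⟩; exact t.card_le_univ⟩ ⟨s, hs, rfl⟩

theorem card_le_indepNum_of_injective {ι V : Type*} [Fintype ι] [Fintype V] {G : SimpleGraph V}
    {f : ι → V} (hf : Function.Injective f) (hindep : Pairwise fun i j => ¬ G.Adj (f i) (f j)) :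
    Fintype.card ι ≤ _root_.indepNum G := by
  have hs : IsIndep G ↑(Finset.univ.map ⟨f, hf⟩) := by
    simp only [IsIndep, Finset.coe_map, Finset.coe_univ, Set.image_univ]
    rintro _ ⟨i, rfl⟩ _ ⟨j, rfl⟩ hne
    exact hindep fun hij => hne (congrArg f hij)
  simpa using le_indepNum hs

def shiftXor (k : Fin 5) (c : Bool) (v : Fin 5 → Bool) : Fin 5 → Bool := fun i => v (i + k) ^^ c

def basePair : Bool → (Fin 5 → Bool) × (Fin 5 → Bool)
  | false => (![true, true, false, false, false], ![false, true, false, false, true])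
  | true => (![true, false, true, false, false], ![false, false, true, true, true])

def orbitPoint (p : Fin 5 × Bool × Bool) : (Fin 5 → Bool) × (Fin 5 → Bool) :=
  Prod.map (shiftXor p.1 p.2.1) (shiftXor p.1 p.2.1) (basePair p.2.2)

theorem orbitPoint_injective : Function.Injective orbitPoint := by
  decide

theorem orbitPoint_pairwise_not_adj :
    Pairwise fun p q => ¬ (strongProd gilbert gilbert).Adj (orbitPoint p) (orbitPoint q) := by
  unfold Pairwise
  decide

theorem stmt6 : 20 ≤ _root_.indepNum (strongProd gilbert gilbert) :=
  card_le_indepNum_of_injective orbitPoint_injective orbitPoint_pairwise_not_adj
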